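/- Fix ε ∈ (0,1] with εn an integer, columns a^1,…,a^n ∈ [0,1]^m, budget B > 0, and an index i ∈ {1,…,m}. Let w ⊆ {1,…,n} satisfy a_i(w) ≥ (1 − ε/2)B, and let S be a uniformly random εn-element subset of {1,…,n}. Then Pr[ a_i^S(w) ≤ (1 − ε)B ] ≤ 2·exp(−ε³B/33). -/

import Mathlib

/-!
Put `x t = a t i` for `t ∈ w` and `x t = 0` otherwise, so that `occ a i (w ∩ S) = ∑ t ∈ S, x t`
and the claim is a lower-tail bound for a sum sampled without replacement. Chernoff's method
applies: by Markov, the bad samples number at most `exp (l θ)` times `∑_S ∏_{t ∈ S} exp (-l x t)`,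
an elementary symmetric function of the `exp (-l x t)`, which Maclaurin's inequality bounds by
`C(n, k)` times the `k`-th power of their mean. Convexity of `exp` bounds that mean by
`exp (-(1 - exp (-l)) · mean x)`, and `l = (μ - θ) / (2μ)` gives `exp (-(μ - θ)² / (4μ))` with
`μ = ε a_i(w)` and `θ = ε (1 - ε) B`; this exponent is at least `ε³ B / 16`.
-/

open Finset

/-- Occupation of row `i` by the index set `w`. -/
def occ {n m : ℕ} (a : Fin n → Fin m → ℝ) (i : Fin m) (w : Finset (Fin n)) : ℝ :=
  ∑ t ∈ w, a t i

open Real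

theorem Multiset.esymm_cons_succ {R : Type*} [CommSemiring R] (a : R) (s : Multiset R) (k : ℕ) :
    (a ::ₘ s).esymm (k + 1) = s.esymm (k + 1) + a * s.esymm k := by
  simp [Multiset.esymm, Multiset.powersetCard_cons, Multiset.sum_map_mul_left]

section Maclaurin

variable {R : Type*} [Field R] [LinearOrder R] [IsStrictOrderedRing R]

lemma pow_mul_add_succ_mul_le_add_pow_succ {m e : R} (hm : 0 ≤ m) (hme : 0 ≤ m + e) (k : ℕ) :
    m ^ k * (m + (k + 1) * e) ≤ (m + e) ^ (k + 1) := by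
  induction k with
  | zero => simp
  | succ k ih =>
    have hk : 0 ≤ m ^ k * ((k + 1) * e ^ 2) := by positivity
    push_cast
    calc m ^ (k + 1) * (m + (k + 1 + 1) * e)
        ≤ m ^ k * (m + (k + 1) * e) * (m + e) := by linear_combination hk
      _ ≤ (m + e) ^ (k + 1) * (m + e) := mul_le_mul_of_nonneg_right ih hme
      _ = (m + e) ^ (k + 1 + 1) := (pow_succ _ _).symm

theorem Multiset.esymm_le_choose_mul_pow (s : Multiset R) (hs : ∀ x ∈ s, 0 ≤ x) (k : ℕ) :
    s.esymm k ≤ (s.card.choose k : R) * (s.sum / s.card) ^ k := by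
  induction s using Multiset.induction_on generalizing k with
  | empty => cases k <;> simp [Multiset.esymm, Multiset.powersetCard_zero_right]
  | cons a s ih =>
    cases k with
    | zero => simp [Multiset.esymm]
    | succ k =>
    have ha : 0 ≤ a := hs a (Multiset.mem_cons_self a s)
    have hs' : ∀ x ∈ s, 0 ≤ x := fun x hx => hs x (Multiset.mem_cons_of_mem hx)
    set N := s.card
    set m := s.sum / N
    have hm : 0 ≤ m := div_nonneg (Multiset.sum_nonneg hs') N.cast_nonneg
    have hsum : s.sum = N * m := by
      rcases N.eq_zero_or_pos with hN | hN
      · rw [hN, Nat.cast_zero, zero_mul, Multiset.card_eq_zero.1 hN, Multiset.sum_zero]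
      · have : (N : R) ≠ 0 := by positivity
        simp only [m]; field_simp
    have hN1 : (N : R) + 1 ≠ 0 := by positivity
    set e := (a - m) / (N + 1)
    have hNe : (N + 1) * e = a - m := by simp only [e]; field_simp
    have hpascal : (N.choose (k + 1) : R) = ((N + 1).choose (k + 1) : R) - N.choose k := by
      rw [Nat.choose_succ_succ', Nat.cast_add]; ring
    have habsorb : ((N : R) + 1) * N.choose k = ((N + 1).choose (k + 1) : R) * (k + 1) := by
      exact_mod_cast Nat.add_one_mul_choose_eq N k
    have hmean : (a + s.sum) / (N + 1) = m + e := by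
      rw [hsum, div_eq_iff hN1]
      linear_combination -hNe
    -- The new mean is `m + e`; Pascal's rule and `(N + 1) C(N, k) = (k + 1) C(N + 1, k + 1)`
    -- reduce the step to Bernoulli's inequality.
    rw [Multiset.esymm_cons_succ, Multiset.card_cons, Multiset.sum_cons, Nat.cast_add_one, hmean]
    calc s.esymm (k + 1) + a * s.esymm k
        ≤ N.choose (k + 1) * m ^ (k + 1) + a * (N.choose k * m ^ k) :=
          add_le_add (ih hs' (k + 1)) (mul_le_mul_of_nonneg_left (ih hs' k) ha)
      _ = (N + 1).choose (k + 1) * (m ^ k * (m + (k + 1) * e)) := by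
          linear_combination m ^ (k + 1) * hpascal + e * m ^ k * habsorb
            - N.choose k * m ^ k * hNe
      _ ≤ (N + 1).choose (k + 1) * (m + e) ^ (k + 1) := by
          gcongr
          refine pow_mul_add_succ_mul_le_add_pow_succ hm ?_ k
          rw [← hmean]
          exact div_nonneg (add_nonneg ha (Multiset.sum_nonneg hs')) (by positivity)

theorem Finset.sum_powersetCard_prod_le {ι : Type*} (s : Finset ι) (f : ι → R)
    (hf : ∀ t ∈ s, 0 ≤ f t) (k : ℕ) :
    ∑ S ∈ s.powersetCard k, ∏ t ∈ S, f t ≤ ((#s).choose k : R) * ((∑ t ∈ s, f t) / #s) ^ k := by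
  simpa [← Finset.esymm_map_val] using
    (s.val.map f).esymm_le_choose_mul_pow (by simpa using hf) k

end Maclaurin

lemma Real.exp_neg_mul_le_one_sub_mul {x : ℝ} (hx : x ∈ Set.Icc 0 1) (l : ℝ) :
    exp (-(l * x)) ≤ 1 - x * (1 - exp (-l)) := by
  have h := convexOn_exp.2 (Set.mem_univ 0) (Set.mem_univ (-l)) (sub_nonneg.2 hx.2) hx.1
    (sub_add_cancel 1 x)
  simp only [smul_eq_mul, mul_zero, zero_add, Real.exp_zero, mul_one] at h
  rw [show x * -l = -(l * x) by ring] at h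
  linarith

lemma Real.exp_neg_le_one_sub_add_sq {x : ℝ} (hx : 0 ≤ x) : exp (-x) ≤ 1 - x + x ^ 2 := by
  have h1x : 0 < 1 + x := by linarith
  calc exp (-x) = (Real.exp x)⁻¹ := Real.exp_neg x
    _ ≤ (1 + x)⁻¹ := inv_anti₀ h1x (by linarith [Real.add_one_le_exp x])
    _ ≤ 1 - x + x ^ 2 := by
      rw [inv_le_iff_one_le_mul₀ h1x]
      nlinarith [pow_nonneg hx 3]

lemma exists_mul_sub_mul_one_sub_exp_neg_le {μ θ : ℝ} (hμ : 0 < μ) (hθ : θ ≤ μ) :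
    ∃ l ≥ 0, l * θ - μ * (1 - exp (-l)) ≤ -((μ - θ) ^ 2 / (4 * μ)) := by
  set l := (μ - θ) / (2 * μ)
  have hl : 0 ≤ l := div_nonneg (sub_nonneg.2 hθ) (by positivity)
  refine ⟨l, hl, ?_⟩
  have hexp := Real.exp_neg_le_one_sub_add_sq hl
  have hval : l * θ - μ * (l - l ^ 2) = -((μ - θ) ^ 2 / (4 * μ)) := by
    simp only [l]; field_simp; ring
  nlinarith

namespace Finset

variable {ι : Type*}

lemma sum_exp_neg_mul_div_card_le (s : Finset ι) (x : ι → ℝ) (hx : ∀ t ∈ s, x t ∈ Set.Icc 0 1)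
    (l : ℝ) :
    (∑ t ∈ s, exp (-(l * x t))) / #s ≤
      exp (-((∑ t ∈ s, x t) / #s * (1 - exp (-l)))) := by
  rcases s.eq_empty_or_nonempty with rfl | hs
  · simp
  have hcard : (0 : ℝ) < #s := by exact_mod_cast hs.card_pos
  calc (∑ t ∈ s, exp (-(l * x t))) / #s
      ≤ (∑ t ∈ s, (1 - x t * (1 - exp (-l)))) / #s := by
        gcongr with t ht
        exact Real.exp_neg_mul_le_one_sub_mul (hx t ht) l
    _ = 1 - (∑ t ∈ s, x t) / #s * (1 - exp (-l)) := by
        rw [sum_sub_distrib, ← sum_mul]; field_simp; simp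
    _ ≤ _ := by linarith [Real.add_one_le_exp (-((∑ t ∈ s, x t) / #s * (1 - exp (-l))))]

theorem sum_powersetCard_exp_neg_mul_sum_le (s : Finset ι) (x : ι → ℝ)
    (hx : ∀ t ∈ s, x t ∈ Set.Icc 0 1) (l : ℝ) (k : ℕ) :
    ∑ S ∈ s.powersetCard k, exp (-(l * ∑ t ∈ S, x t)) ≤
      (#s).choose k * exp (-(k / #s * (∑ t ∈ s, x t) * (1 - exp (-l)))) := by
  have hprod : ∀ S : Finset ι, exp (-(l * ∑ t ∈ S, x t)) = ∏ t ∈ S, exp (-(l * x t)) :=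
    fun S => by rw [← Real.exp_sum, mul_sum, sum_neg_distrib]
  simp only [hprod]
  refine (s.sum_powersetCard_prod_le _ (fun t _ => Real.exp_nonneg _) k).trans ?_
  gcongr
  refine (pow_le_pow_left₀ (by positivity) (s.sum_exp_neg_mul_div_card_le x hx l) k).trans_eq ?_
  rw [← Real.exp_nat_mul]
  congr 1
  ring

lemma card_filter_le_exp_mul_sum_exp (P : Finset ι) (X : ι → ℝ) {l : ℝ} (hl : 0 ≤ l) (θ : ℝ) :
    (#{S ∈ P | X S ≤ θ} : ℝ) ≤ exp (l * θ) * ∑ S ∈ P, exp (-(l * X S)) := by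
  calc (#{S ∈ P | X S ≤ θ} : ℝ) = ∑ S ∈ P with X S ≤ θ, exp (l * θ) * exp (-(l * θ)) := by
        simp [← Real.exp_add]
    _ ≤ ∑ S ∈ P with X S ≤ θ, exp (l * θ) * exp (-(l * X S)) := by
        gcongr with S hS
        exact (mem_filter.1 hS).2
    _ ≤ ∑ S ∈ P, exp (l * θ) * exp (-(l * X S)) :=
        sum_le_sum_of_subset_of_nonneg (filter_subset _ _) fun _ _ _ => by positivity
    _ = _ := (mul_sum _ _ _).symm

theorem card_filter_sum_le_le_choose_mul_exp (s : Finset ι) (x : ι → ℝ)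
    (hx : ∀ t ∈ s, x t ∈ Set.Icc 0 1) (k : ℕ) {μ θ : ℝ} (hμ_eq : k / #s * ∑ t ∈ s, x t = μ)
    (hμ : 0 < μ) (hθ : θ ≤ μ) :
    (#{S ∈ s.powersetCard k | ∑ t ∈ S, x t ≤ θ} : ℝ) ≤
      (#s).choose k * exp (-((μ - θ) ^ 2 / (4 * μ))) := by
  obtain ⟨l, hl, hexp⟩ := exists_mul_sub_mul_one_sub_exp_neg_le hμ hθ
  calc (#{S ∈ s.powersetCard k | ∑ t ∈ S, x t ≤ θ} : ℝ)
      ≤ exp (l * θ) * ∑ S ∈ s.powersetCard k, exp (-(l * ∑ t ∈ S, x t)) :=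
        card_filter_le_exp_mul_sum_exp _ _ hl θ
    _ ≤ exp (l * θ) * ((#s).choose k * exp (-(μ * (1 - exp (-l))))) := by
        gcongr
        rw [← hμ_eq]
        exact s.sum_powersetCard_exp_neg_mul_sum_le x hx l k
    _ = (#s).choose k * exp (l * θ - μ * (1 - exp (-l))) := by
        rw [mul_left_comm, ← Real.exp_add, ← sub_eq_add_neg]
    _ ≤ _ := by gcongr

end Finset

lemma pow_three_mul_div_le_sq_sub_div {ε B O : ℝ} (hε0 : 0 < ε) (hε1 : ε ≤ 1) (hB : 0 < B)
    (hO : (1 - ε / 2) * B ≤ O) :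
    ε ^ 3 * B / 33 ≤ (ε * O - ε * ((1 - ε) * B)) ^ 2 / (4 * (ε * O)) := by
  have hgap : ε * B / 2 ≤ O - (1 - ε) * B := by linarith
  have hgap' : ε * O / 2 ≤ O - (1 - ε) * B := by
    nlinarith [mul_le_mul_of_nonneg_left hO (by linarith : 0 ≤ 1 - ε / 2),
      mul_nonneg (sq_nonneg ε) hB.le]
  have hO0 : 0 < O := lt_of_lt_of_le (by nlinarith) hO
  rw [div_le_div_iff₀ (by norm_num) (by positivity)]
  nlinarith [mul_le_mul hgap hgap' (by positivity) ((by positivity : 0 ≤ ε * B / 2).trans hgap),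
    pow_pos hε0 2]

theorem witness_concentration_general
    (n m : ℕ)
    (ε : ℝ) (hε : ε ∈ Set.Ioc (0:ℝ) 1)
    (k : ℕ) (hk : (k : ℝ) = ε * n)
    (a : Fin n → Fin m → ℝ) (ha : ∀ t i, a t i ∈ Set.Icc (0:ℝ) 1)
    (B : ℝ) (hB : 0 < B)
    (i : Fin m) (w : Finset (Fin n))
    (hw : (1 - ε / 2) * B ≤ occ a i w) :
    ((((Finset.univ : Finset (Fin n)).powersetCard k).filter
        (fun S => (1 / ε) * occ a i (w ∩ S) ≤ (1 - ε) * B)).card : ℝ) /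
      ((((Finset.univ : Finset (Fin n)).powersetCard k).card : ℝ)) ≤
      2 * Real.exp (-(ε ^ 3 * B / 33)) := by
  obtain ⟨hε0, hε1⟩ := hε
  set x : Fin n → ℝ := fun t => if t ∈ w then a t i else 0
  have hx : ∀ t ∈ univ, x t ∈ Set.Icc 0 1 := fun t _ => by
    by_cases ht : t ∈ w <;> simp [x, ht, ha t i]
  have hx_sum : ∀ S, ∑ t ∈ S, x t = occ a i (w ∩ S) := fun S => by
    simp only [x, sum_ite_mem, occ, inter_comm]
  have hO : 0 < occ a i w := lt_of_lt_of_le (by nlinarith) hw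
  have hn : (n : ℝ) ≠ 0 := by
    rintro hn
    obtain rfl : n = 0 := by exact_mod_cast hn
    simp [occ, Subsingleton.elim w ∅] at hO
  have hμ : k / #(univ : Finset (Fin n)) * ∑ t, x t = ε * occ a i w := by
    rw [hx_sum, inter_univ, card_univ, Fintype.card_fin, hk]
    field_simp
  have hevent : ∀ S : Finset (Fin n),
      (1 / ε) * occ a i (w ∩ S) ≤ (1 - ε) * B ↔ ∑ t ∈ S, x t ≤ ε * ((1 - ε) * B) := fun S => by
    rw [hx_sum, one_div_mul_eq_div, div_le_iff₀' hε0]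
  have htail := card_filter_sum_le_le_choose_mul_exp univ x hx k hμ (by positivity)
    (θ := ε * ((1 - ε) * B)) (by gcongr; nlinarith)
  simp only [hevent, card_powersetCard, card_univ, Fintype.card_fin] at htail ⊢
  refine div_le_of_le_mul₀ (by positivity) (by positivity) ?_
  calc _ ≤ _ := htail
    _ ≤ (n.choose k : ℝ) * exp (-(ε ^ 3 * B / 33)) := by
        gcongr _ * exp (-?_)
        exact pow_three_mul_div_le_sq_sub_div hε0 hε1 hB hw
    _ ≤ 2 * exp (-(ε ^ 3 * B / 33)) * n.choose k := by
        linarith [mul_nonneg (n.choose k).cast_nonneg (Real.exp_nonneg (-(ε ^ 3 * B / 33)))]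

/-- Concentration bound for a single witness: if `a_i(w) ≥ (1 − ε/2)B` then the
scaled sampled occupation `a_i^S(w)` falls below `(1−ε)B` with probability at
most `2·exp(−ε³B/33)` over a uniformly random `εn`-element sample `S`. -/
theorem witness_concentration
    (n m : ℕ) (hm : 1 ≤ m)
    (ε : ℝ) (hε : ε ∈ Set.Ioc (0:ℝ) 1)
    (k : ℕ) (hk : (k : ℝ) = ε * n)
    (a : Fin n → Fin m → ℝ) (ha : ∀ t i, a t i ∈ Set.Icc (0:ℝ) 1)
    (B : ℝ) (hB : 0 < B)
    (i : Fin m) (w : Finset (Fin n))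
    (hw : (1 - ε / 2) * B ≤ occ a i w) :
    ((((Finset.univ : Finset (Fin n)).powersetCard k).filter
        (fun S => (1 / ε) * occ a i (w ∩ S) ≤ (1 - ε) * B)).card : ℝ) /
      ((((Finset.univ : Finset (Fin n)).powersetCard k).card : ℝ)) ≤
      2 * Real.exp (-(ε ^ 3 * B / 33)) :=
  witness_concentration_general n m ε hε k hk a ha B hB i w hw
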